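/- Let K be a field and let (V, c) be a braided vector space over K such that c is of Hecke type of mark λ with λ ≠ 0 and λ ≠ 1. If L is a categorical subspace of V, then L = 0 or L = V. -/
import Mathlib


open TensorProduct

noncomputable section

variable {K : Type*} [Field K] {V : Type*} [AddCommGroup V] [Module K V]

/-- The endomorphism `c ⊗ id_V` of `V ⊗ (V ⊗ V)` (transported along associativity). -/
def opC1 (c : V ⊗[K] V →ₗ[K] V ⊗[K] V) :
    V ⊗[K] (V ⊗[K] V) →ₗ[K] V ⊗[K] (V ⊗[K] V) :=
  (TensorProduct.assoc K V V V).toLinearMap ∘ₗ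
    LinearMap.rTensor V c ∘ₗ (TensorProduct.assoc K V V V).symm.toLinearMap

/-- The endomorphism `id_V ⊗ c` of `V ⊗ (V ⊗ V)`. -/
def opC2 (c : V ⊗[K] V →ₗ[K] V ⊗[K] V) :
    V ⊗[K] (V ⊗[K] V) →ₗ[K] V ⊗[K] (V ⊗[K] V) :=
  LinearMap.lTensor V c

/-- The map `b ⊗ id_V : V ⊗ (V ⊗ V) → V ⊗ V`. -/
def opB1 (b : V ⊗[K] V →ₗ[K] V) :
    V ⊗[K] (V ⊗[K] V) →ₗ[K] V ⊗[K] V :=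
  LinearMap.rTensor V b ∘ₗ (TensorProduct.assoc K V V V).symm.toLinearMap

/-- The map `id_V ⊗ b : V ⊗ (V ⊗ V) → V ⊗ V`. -/
def opB2 (b : V ⊗[K] V →ₗ[K] V) :
    V ⊗[K] (V ⊗[K] V) →ₗ[K] V ⊗[K] V :=
  LinearMap.lTensor V b

/-- The braid equation `c₁ ∘ c₂ ∘ c₁ = c₂ ∘ c₁ ∘ c₂`. -/
def BraidEq (c : V ⊗[K] V →ₗ[K] V ⊗[K] V) : Prop :=
  opC1 c ∘ₗ opC2 c ∘ₗ opC1 c = opC2 c ∘ₗ opC1 c ∘ₗ opC2 c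

/-- `c` is of Hecke type of mark `lam`: `(c + id) ∘ (c - lam • id) = 0`. -/
def IsHecke (lam : K) (c : V ⊗[K] V →ₗ[K] V ⊗[K] V) : Prop :=
  (c + LinearMap.id) ∘ₗ (c - lam • LinearMap.id) = 0

/-- `b` is a `c`-bracket: `c ∘ b₁ = b₂ ∘ c₁ ∘ c₂` and `c ∘ b₂ = b₁ ∘ c₂ ∘ c₁`. -/
def IsBracket (c : V ⊗[K] V →ₗ[K] V ⊗[K] V) (b : V ⊗[K] V →ₗ[K] V) : Prop :=
  c ∘ₗ opB1 b = opB2 b ∘ₗ opC1 c ∘ₗ opC2 c ∧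
  c ∘ₗ opB2 b = opB1 b ∘ₗ opC2 c ∘ₗ opC1 c

/-- The linear map `V ⊗ V → T(V)`, `v ⊗ w ↦ ι v * ι w`. -/
def tensMul : V ⊗[K] V →ₗ[K] TensorAlgebra K V :=
  LinearMap.mul' K (TensorAlgebra K V) ∘ₗ
    TensorProduct.map (TensorAlgebra.ι K) (TensorAlgebra.ι K)

/-- The relation on `T(V)` whose associated ring quotient is
`U(V,c,b) = T(V)/(c(z) - lam•z - b(z) : z ∈ V ⊗ V)`. -/
def envRel (lam : K) (c : V ⊗[K] V →ₗ[K] V ⊗[K] V) (b : V ⊗[K] V →ₗ[K] V) :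
    TensorAlgebra K V → TensorAlgebra K V → Prop :=
  fun x y => ∃ z : V ⊗[K] V,
    x = tensMul (c z) ∧ y = lam • tensMul z + TensorAlgebra.ι K (b z)

/-- The canonical map `ι_{c,b} : V → U(V,c,b)`. -/
def envIota (lam : K) (c : V ⊗[K] V →ₗ[K] V ⊗[K] V) (b : V ⊗[K] V →ₗ[K] V) :
    V →ₗ[K] RingQuot (envRel lam c b) :=
  (RingQuot.mkAlgHom K (envRel lam c b)).toLinearMap ∘ₗ TensorAlgebra.ι K

/-- The q-integer `(n)_lam = 1 + lam + ⋯ + lam^(n-1)`. -/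
def qInt (lam : K) (n : ℕ) : K := ∑ i ∈ Finset.range n, lam ^ i

/-- The q-factorial `(n)!_lam = (1)_lam (2)_lam ⋯ (n)_lam`. -/
def qFac (lam : K) (n : ℕ) : K := ∏ i ∈ Finset.range n, qInt lam (i + 1)


/-- The image of `L ⊗ V` in `V ⊗ V`: the span of the elements `x ⊗ v` with `x ∈ L`, `v ∈ V`. -/
def imgLV (L : Submodule K V) : Submodule K (V ⊗[K] V) :=
  Submodule.span K {z | ∃ x ∈ L, ∃ v : V, z = x ⊗ₜ[K] v}

/-- The image of `V ⊗ L` in `V ⊗ V`: the span of the elements `v ⊗ x` with `v ∈ V`, `x ∈ L`. -/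
def imgVL (L : Submodule K V) : Submodule K (V ⊗[K] V) :=
  Submodule.span K {z | ∃ v : V, ∃ x ∈ L, z = v ⊗ₜ[K] x}

/-- **Theorem.**  If `(V,c)` is a braided vector space of Hecke type of mark `lam ≠ 0, 1`,
then any categorical subspace `L` of `V` is `0` or `V`. -/
theorem categorical_subspace_trivial
    (lam : K) (hlam0 : lam ≠ 0) (hlam1 : lam ≠ 1)
    (c : V ⊗[K] V →ₗ[K] V ⊗[K] V) (hbraid : BraidEq c) (hHecke : IsHecke lam c)
    (L : Submodule K V)
    (hcat1 : ∀ z ∈ imgLV L, c z ∈ imgVL L)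
    (hcat2 : ∀ z ∈ imgVL L, c z ∈ imgLV L) :
    L = ⊥ ∨ L = ⊤ := by
  by_cases hL : L = ⊥
  · exact Or.inl hL
  right
  obtain ⟨x, hxL, hx0⟩ := Submodule.exists_mem_ne_zero_of_ne_bot hL
  have hsub : lam - 1 ≠ 0 := sub_ne_zero.mpr hlam1
  -- pointwise Hecke relation
  have hck : ∀ z : V ⊗[K] V, c (c z) = (lam - 1) • c z + lam • z := by
    intro z
    have h := LinearMap.congr_fun hHecke z
    simp only [LinearMap.comp_apply, LinearMap.add_apply, LinearMap.sub_apply,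
      LinearMap.smul_apply, LinearMap.id_apply, LinearMap.zero_apply, map_sub,
      map_smul] at h
    have e : c (c z) + c z = lam • c z + lam • z := by
      rw [← smul_add]; exact sub_eq_zero.mp h
    rw [eq_sub_of_add_eq e, sub_smul, one_smul]
    abel
  -- key: everything in imgLV lies in imgVL
  have key : ∀ z ∈ imgLV L, z ∈ imgVL L := by
    intro z hz
    have h1 : c z ∈ imgVL L := hcat1 z hz
    have h2 : c (c z) ∈ imgLV L := hcat2 _ h1
    have hcz : c z ∈ imgLV L := by
      rw [← Submodule.smul_mem_iff _ hsub]
      have e1 : (lam - 1) • c z = c (c z) - lam • z := by rw [hck z]; abel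
      rw [e1]
      exact Submodule.sub_mem _ h2 (Submodule.smul_mem _ _ hz)
    have h3 : c (c z) ∈ imgVL L := hcat1 _ hcz
    rw [← Submodule.smul_mem_iff _ hlam0]
    have e2 : lam • z = c (c z) - (lam - 1) • c z := by rw [hck z]; abel
    rw [e2]
    exact Submodule.sub_mem _ h3 (Submodule.smul_mem _ _ h1)
  -- a dual functional with f x ≠ 0
  obtain ⟨f, hfx⟩ : ∃ f : Module.Dual K V, f x ≠ 0 := by
    by_contra h
    push_neg at h
    exact hx0 ((Module.forall_dual_apply_eq_zero_iff K x).mp h)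
  set φ : V ⊗[K] V →ₗ[K] V ⧸ L :=
    (TensorProduct.lid K (V ⧸ L)).toLinearMap ∘ₗ TensorProduct.map f L.mkQ with hφdef
  have hφ : imgVL L ≤ LinearMap.ker φ := by
    rw [imgVL, Submodule.span_le]
    rintro _ ⟨v, y, hyL, rfl⟩
    simp only [SetLike.mem_coe, LinearMap.mem_ker, hφdef, LinearMap.comp_apply,
      TensorProduct.map_tmul, LinearEquiv.coe_coe, TensorProduct.lid_tmul,
      Submodule.mkQ_apply]
    rw [(Submodule.Quotient.mk_eq_zero L).mpr hyL, smul_zero]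
  rw [Submodule.eq_top_iff']
  intro v
  have hzLV : x ⊗ₜ[K] v ∈ imgLV L := Submodule.subset_span ⟨x, hxL, v, rfl⟩
  have hzVL := key _ hzLV
  have h0 : φ (x ⊗ₜ[K] v) = 0 := hφ hzVL
  simp only [hφdef, LinearMap.comp_apply, TensorProduct.map_tmul, LinearEquiv.coe_coe,
    TensorProduct.lid_tmul, Submodule.mkQ_apply] at h0
  rcases smul_eq_zero.mp h0 with h | h
  · exact absurd h hfx
  · exact (Submodule.Quotient.mk_eq_zero L).mp h

end
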